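/- With the assumptions and notation of the previous statement (N ≥ 2, m_α > 0, K > 0, n^R > 0, p^R ∈ ℝ, θ > 0, ψ_α^R ∈ ℝ, and F(ρ₁,…,ρ_N) = Σ_α ρ_α ψ_α^R + (K − p^R)(1 − n/n^R) + K·(n/n^R)·ln(n/n^R) + θ·Σ_α n_α ln(n_α/n), n_α = ρ_α/m_α, n = Σ_α n_α, defined on (0,∞)^N), the chemical potential map μ : (0,∞)^N → ℝ^N given by μ_α(ρ) = ∂F/∂ρ_α(ρ) is injective, and at every point ρ ∈ (0,∞)^N the Hessian matrix (∂²F/∂ρ_β∂ρ_γ)(ρ) = (∂μ_β/∂ρ_γ)(ρ) is symmetric positive definite, hence invertible. -/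

import Mathlib

/-!
In the number densities `nₐ = ρₐ / mₐ`, the free energy is a linear term, plus the strictly
convex bulk term `K (n/nᴿ) log (n/nᴿ)` of the total density `n = ∑ nₐ`, plus `θ` times the
mixing entropy `∑ nₐ log (nₐ / n)`. The Hessian of the mixing entropy is `diag (1/nₐ) - 1/n`,
positive semidefinite by Cauchy–Schwarz with kernel spanned by `n`, the direction in which the
bulk term is strictly convex; so the Hessian of `F` is positive definite. Injectivity of the
gradient then follows by the mean value theorem: along the segment from `ρ` to `ρ'`, the
function `t ↦ ⟪ρ' - ρ, μ(ρ + t (ρ' - ρ))⟫` is strictly increasing.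
-/

open Real Matrix Filter Topology Set

theorem HasFDerivAt.div_const {𝕜 E : Type*} [NontriviallyNormedField 𝕜] [NormedAddCommGroup E]
    [NormedSpace 𝕜 E] {f : E → 𝕜} {f' : E →L[𝕜] 𝕜} {x : E} (hf : HasFDerivAt f f' x) (c : 𝕜) :
    HasFDerivAt (fun y => f y / c) (c⁻¹ • f') x := by
  simpa only [div_eq_mul_inv] using hf.mul_const c⁻¹

section General

variable {ι : Type*}

lemma convex_setOf_forall_pos : Convex ℝ {x : ι → ℝ | ∀ i, 0 < x i} := by
  simpa [Set.pi] using convex_pi (s := Set.univ) fun (_ : ι) _ => convex_Ioi (𝕜 := ℝ) (0 : ℝ)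

variable [Fintype ι]

lemma hasFDerivAt_apply_div (α : ι) (c : ℝ) (x : ι → ℝ) :
    HasFDerivAt (fun y : ι → ℝ => y α / c)
      (c⁻¹ • (ContinuousLinearMap.proj α : (ι → ℝ) →L[ℝ] ℝ)) x :=
  HasFDerivAt.div_const (ContinuousLinearMap.proj α : (ι → ℝ) →L[ℝ] ℝ).hasFDerivAt c

lemma ContinuousLinearMap.sum_smul_proj_apply_single [DecidableEq ι] (c : ι → ℝ) (j : ι) :
    (∑ i, c i • (ContinuousLinearMap.proj i : (ι → ℝ) →L[ℝ] ℝ)) (Pi.single j 1) = c j := by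
  simp [Pi.single_apply]

lemma ContinuousLinearMap.eq_sum_smul_proj [DecidableEq ι] (L : (ι → ℝ) →L[ℝ] ℝ) :
    L = ∑ i, L (Pi.single i 1) • ContinuousLinearMap.proj i := by
  ext x
  conv_lhs => rw [pi_eq_sum_univ' x]
  simp [map_sum, mul_comm]

lemma isOpen_setOf_forall_pos : IsOpen {x : ι → ℝ | ∀ i, 0 < x i} := by
  simpa [Set.pi] using isOpen_set_pi Set.finite_univ fun (_ : ι) _ => isOpen_Ioi (a := (0 : ℝ))

lemma Finset.sum_mul_log_div_sum (a : ι → ℝ) (h : ∑ i, a i ≠ 0) :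
    ∑ i, a i * log (a i / ∑ j, a j) = ∑ i, a i * log (a i) - (∑ i, a i) * log (∑ i, a i) := by
  rw [Finset.sum_mul, ← Finset.sum_sub_distrib]
  refine Finset.sum_congr rfl fun i _ => ?_
  rcases eq_or_ne (a i) 0 with hi | hi
  · simp [hi]
  · rw [log_div hi h, mul_sub]

theorem Convex.injOn_of_hasFDerivAt_of_dotProduct_pos {U : Set (ι → ℝ)} (hU : Convex ℝ U)
    {G : (ι → ℝ) → ι → ℝ} {G' : (ι → ℝ) → (ι → ℝ) →L[ℝ] (ι → ℝ)}
    (hG : ∀ x ∈ U, HasFDerivAt G (G' x) x) (hpos : ∀ x ∈ U, ∀ d ≠ 0, 0 < d ⬝ᵥ G' x d) :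
    U.InjOn G := by
  intro x hx y hy hxy
  by_contra hne
  set d := y - x
  have hd : d ≠ 0 := sub_ne_zero.mpr (Ne.symm hne)
  have hseg : ∀ t ∈ Icc (0 : ℝ) 1, x + t • d ∈ U := fun t ht => hU.add_smul_sub_mem hx hy ht
  set φ : ℝ → ℝ := fun t => d ⬝ᵥ G (x + t • d)
  have hφ : ∀ t ∈ Icc (0 : ℝ) 1, HasDerivAt φ (d ⬝ᵥ G' (x + t • d) d) t := fun t ht => by
    have hline : HasDerivAt (fun s : ℝ => x + s • d) d t := by
      simpa using ((hasDerivAt_id t).smul_const d).const_add x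
    have hcomp := hasDerivAt_pi.mp ((hG _ (hseg t ht)).comp_hasDerivAt t hline)
    exact HasDerivAt.fun_sum fun i _ => (hcomp i).const_mul (d i)
  obtain ⟨c, hc, hφc⟩ := exists_hasDerivAt_eq_slope φ _ zero_lt_one
    (fun t ht => (hφ t ht).continuousAt.continuousWithinAt)
    (fun t ht => hφ t (Ioo_subset_Icc_self ht))
  have hφ01 : φ 1 = φ 0 := by simp [φ, d, hxy]
  rw [hφ01, sub_self, zero_div] at hφc
  exact (hpos _ (hseg c (Ioo_subset_Icc_self hc)) d hd).ne' hφc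

end General

namespace MixtureFreeEnergy

variable {ι : Type*} [Fintype ι]

noncomputable section

def totalDensity (m ρ : ι → ℝ) : ℝ := ∑ α, ρ α / m α

def freeEnergy (m : ι → ℝ) (K nR θ pR : ℝ) (ψR ρ : ι → ℝ) : ℝ :=
  (∑ α, ρ α * ψR α)
  + (K - pR) * (1 - totalDensity m ρ / nR)
  + K * (totalDensity m ρ / nR) * log (totalDensity m ρ / nR)
  + θ * ∑ α, (ρ α / m α) * log ((ρ α / m α) / totalDensity m ρ)

def chemicalPotential (m : ι → ℝ) (K nR θ pR : ℝ) (ψR : ι → ℝ) (β : ι) (ρ : ι → ℝ) : ℝ :=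
  ψR β + (K / nR * (log (totalDensity m ρ / nR) + 1) - (K - pR) / nR
    + θ * (log (ρ β / m β) - log (totalDensity m ρ))) / m β

def hessian [DecidableEq ι] (m : ι → ℝ) (K nR θ : ℝ) (ρ : ι → ℝ) : Matrix ι ι ℝ :=
  of fun β γ => ((K / nR - θ) / totalDensity m ρ / m γ + if β = γ then θ / ρ β else 0) / m β

end

variable {m ρ : ι → ℝ} {K nR θ pR : ℝ} {ψR : ι → ℝ}

lemma totalDensity_pos [Nonempty ι] (hm : ∀ α, 0 < m α) (hρ : ∀ α, 0 < ρ α) :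
    0 < totalDensity m ρ :=
  Finset.sum_pos (fun α _ => div_pos (hρ α) (hm α)) Finset.univ_nonempty

lemma hasFDerivAt_totalDensity (m ρ : ι → ℝ) :
    HasFDerivAt (totalDensity m)
      (∑ α, (m α)⁻¹ • (ContinuousLinearMap.proj α : (ι → ℝ) →L[ℝ] ℝ)) ρ :=
  HasFDerivAt.fun_sum fun α _ => hasFDerivAt_apply_div α (m α) ρ

lemma freeEnergy_eq_of_pos [Nonempty ι] (hm : ∀ α, 0 < m α) (hρ : ∀ α, 0 < ρ α) :
    freeEnergy m K nR θ pR ψR ρ = (∑ α, ρ α * ψR α)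
      + (K - pR) * (1 - totalDensity m ρ / nR)
      + K * (totalDensity m ρ / nR * log (totalDensity m ρ / nR))
      + θ * (∑ α, ρ α / m α * log (ρ α / m α) - totalDensity m ρ * log (totalDensity m ρ)) := by
  have hmix : ∑ α, ρ α / m α * log (ρ α / m α / totalDensity m ρ)
      = ∑ α, ρ α / m α * log (ρ α / m α) - totalDensity m ρ * log (totalDensity m ρ) :=
    Finset.sum_mul_log_div_sum (fun α => ρ α / m α) (totalDensity_pos hm hρ).ne'
  rw [freeEnergy, hmix, mul_assoc K]

variable [DecidableEq ι]

lemma hasFDerivAt_freeEnergy [Nonempty ι] (hm : ∀ α, 0 < m α) (hnR : 0 < nR)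
    (hρ : ∀ α, 0 < ρ α) :
    HasFDerivAt (freeEnergy m K nR θ pR ψR)
      (∑ γ, chemicalPotential m K nR θ pR ψR γ ρ •
        (ContinuousLinearMap.proj γ : (ι → ℝ) →L[ℝ] ℝ)) ρ := by
  have hn := totalDensity_pos hm hρ
  have hD := hasFDerivAt_totalDensity m ρ
  have hlin : HasFDerivAt (fun x : ι → ℝ => ∑ α, x α * ψR α)
      (∑ α, ψR α • (ContinuousLinearMap.proj α : (ι → ℝ) →L[ℝ] ℝ)) ρ :=
    HasFDerivAt.fun_sum fun α _ =>
      (ContinuousLinearMap.proj α : (ι → ℝ) →L[ℝ] ℝ).hasFDerivAt.mul_const (ψR α)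
  have hpress := ((hD.div_const nR).const_sub 1).const_mul (K - pR)
  have hbulk := ((hasDerivAt_mul_log (div_pos hn hnR).ne').comp_hasFDerivAt ρ
    (hD.div_const nR)).const_mul K
  have hmix := ((HasFDerivAt.fun_sum (u := Finset.univ) fun α _ =>
    (hasDerivAt_mul_log (div_pos (hρ α) (hm α)).ne').comp_hasFDerivAt ρ
      (hasFDerivAt_apply_div α (m α) ρ)).sub
    ((hasDerivAt_mul_log hn.ne').comp_hasFDerivAt ρ hD)).const_mul θ
  have hF := (((hlin.add hpress).add hbulk).add hmix).congr_of_eventuallyEq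
    (eventually_of_mem (isOpen_setOf_forall_pos.mem_nhds hρ) fun x hx => freeEnergy_eq_of_pos hm hx)
  refine hF.congr_fderiv ((ContinuousLinearMap.eq_sum_smul_proj _).trans
    (Finset.sum_congr rfl fun γ _ => congrArg (· • _) ?_))
  simp [Pi.single_apply, chemicalPotential]
  ring

lemma hasFDerivAt_chemicalPotential [Nonempty ι] (hm : ∀ α, 0 < m α) (hnR : 0 < nR)
    (hρ : ∀ α, 0 < ρ α) (β : ι) :
    HasFDerivAt (chemicalPotential m K nR θ pR ψR β)
      (∑ γ, hessian m K nR θ ρ β γ • (ContinuousLinearMap.proj γ : (ι → ℝ) →L[ℝ] ℝ)) ρ := by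
  have hn := totalDensity_pos hm hρ
  have hD := hasFDerivAt_totalDensity m ρ
  have hbulk := (((hD.div_const nR).log (div_pos hn hnR).ne').add_const 1).const_mul (K / nR)
  have hmix := (((hasFDerivAt_apply_div β (m β) ρ).log (div_pos (hρ β) (hm β)).ne').sub
    (hD.log hn.ne')).const_mul θ
  have hμ := (((hbulk.sub_const ((K - pR) / nR)).add hmix).div_const (m β)).const_add (ψR β)
  refine hμ.congr_fderiv ((ContinuousLinearMap.eq_sum_smul_proj _).trans
    (Finset.sum_congr rfl fun γ _ => congrArg (· • _) ?_))
  simp [Pi.single_apply, hessian]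
  have := (hm β).ne'
  have := (hρ β).ne'
  split_ifs <;> field_simp <;> ring

lemma fderiv_freeEnergy_apply_single [Nonempty ι] (hm : ∀ α, 0 < m α) (hnR : 0 < nR)
    (hρ : ∀ α, 0 < ρ α) (β : ι) :
    fderiv ℝ (freeEnergy m K nR θ pR ψR) ρ (Pi.single β 1)
      = chemicalPotential m K nR θ pR ψR β ρ := by
  rw [(hasFDerivAt_freeEnergy hm hnR hρ).fderiv,
    ContinuousLinearMap.sum_smul_proj_apply_single]

lemma hasFDerivAt_fderiv_freeEnergy_apply_single [Nonempty ι] (hm : ∀ α, 0 < m α)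
    (hnR : 0 < nR) (hρ : ∀ α, 0 < ρ α) (β : ι) :
    HasFDerivAt (fun x => fderiv ℝ (freeEnergy m K nR θ pR ψR) x (Pi.single β 1))
      (∑ γ, hessian m K nR θ ρ β γ • (ContinuousLinearMap.proj γ : (ι → ℝ) →L[ℝ] ℝ)) ρ :=
  (hasFDerivAt_chemicalPotential hm hnR hρ β).congr_of_eventuallyEq <|
    eventually_of_mem (isOpen_setOf_forall_pos.mem_nhds hρ) fun _ hx =>
      fderiv_freeEnergy_apply_single hm hnR hx β

lemma of_fderiv_fderiv_freeEnergy_eq_hessian [Nonempty ι] (hm : ∀ α, 0 < m α) (hnR : 0 < nR)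
    (hρ : ∀ α, 0 < ρ α) :
    (of fun β γ => fderiv ℝ (fun x => fderiv ℝ (freeEnergy m K nR θ pR ψR) x (Pi.single β 1)) ρ
      (Pi.single γ 1)) = hessian m K nR θ ρ := by
  ext β γ
  rw [of_apply, (hasFDerivAt_fderiv_freeEnergy_apply_single hm hnR hρ β).fderiv,
    ContinuousLinearMap.sum_smul_proj_apply_single]

lemma hessian_isSymm : (hessian m K nR θ ρ).IsSymm := by
  ext β γ
  simp only [hessian, transpose_apply, of_apply]
  split_ifs with h h' h'
  · subst h; rfl
  · exact absurd h.symm h'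
  · exact absurd h'.symm h
  · ring

lemma hessian_mulVec (x : ι → ℝ) (β : ι) :
    (hessian m K nR θ ρ *ᵥ x) β
      = ((K / nR - θ) / totalDensity m ρ * (∑ γ, x γ / m γ) + θ * x β / ρ β) / m β := by
  simp only [hessian, mulVec, dotProduct, of_apply, add_div, add_mul, Finset.sum_add_distrib,
    ite_div, zero_div, ite_mul, zero_mul, Finset.sum_ite_eq, Finset.mem_univ, if_true,
    Finset.mul_sum, Finset.sum_div]
  congr 1
  · exact Finset.sum_congr rfl fun γ _ => by ring
  · ring

lemma dotProduct_hessian_mulVec (hm : ∀ α, m α ≠ 0) (hρ : ∀ α, ρ α ≠ 0) (x : ι → ℝ) :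
    x ⬝ᵥ (hessian m K nR θ ρ *ᵥ x) = K / nR / totalDensity m ρ * (∑ γ, x γ / m γ) ^ 2
      + θ * ((∑ γ, (x γ / m γ) ^ 2 / (ρ γ / m γ)) - (∑ γ, x γ / m γ) ^ 2 / totalDensity m ρ) := by
  have hdiag : ∀ γ, x γ * (θ * x γ / ρ γ / m γ) = θ * ((x γ / m γ) ^ 2 / (ρ γ / m γ)) := by
    intro γ
    have := hm γ
    have := hρ γ
    field_simp
  have hrank : ∀ γ, x γ * ((K / nR - θ) / totalDensity m ρ * (∑ β, x β / m β) / m γ)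
      = (K / nR - θ) / totalDensity m ρ * (∑ β, x β / m β) * (x γ / m γ) := fun γ => by ring
  simp only [dotProduct, hessian_mulVec, mul_add, add_div, Finset.sum_add_distrib, hdiag, hrank,
    ← Finset.mul_sum]
  ring

lemma hessian_posDef [Nonempty ι] (hm : ∀ α, 0 < m α) (hρ : ∀ α, 0 < ρ α) (hK : 0 < K)
    (hnR : 0 < nR) (hθ : 0 < θ) : (hessian m K nR θ ρ).PosDef := by
  refine .of_dotProduct_mulVec_pos (isHermitian_iff_isSymm.mpr hessian_isSymm) fun x hx => ?_
  rw [star_trivial, dotProduct_hessian_mulVec (fun α => (hm α).ne') (fun α => (hρ α).ne')]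
  have hn := totalDensity_pos hm hρ
  have hCS : (∑ γ, x γ / m γ) ^ 2 / totalDensity m ρ ≤ ∑ γ, (x γ / m γ) ^ 2 / (ρ γ / m γ) :=
    Finset.sq_sum_div_le_sum_sq_div _ _ fun γ _ => div_pos (hρ γ) (hm γ)
  rcases eq_or_ne (∑ γ, x γ / m γ) 0 with hs | hs
  · obtain ⟨β, hβ⟩ := Function.ne_iff.mp hx
    have hT : 0 < ∑ γ, (x γ / m γ) ^ 2 / (ρ γ / m γ) := by
      refine Finset.sum_pos' (fun γ _ => ?_) ⟨β, Finset.mem_univ β, ?_⟩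
      · have := hρ γ
        have := hm γ
        positivity
      · have := div_ne_zero hβ (hm β).ne'
        have := div_pos (hρ β) (hm β)
        positivity
    rw [hs]
    simp only [ne_eq, OfNat.ofNat_ne_zero, not_false_eq_true, zero_pow, mul_zero, zero_div,
      sub_zero, zero_add]
    positivity
  · have : 0 < K / nR / totalDensity m ρ * (∑ γ, x γ / m γ) ^ 2 := by positivity
    nlinarith

lemma injOn_fderiv_freeEnergy [Nonempty ι] (hm : ∀ α, 0 < m α) (hK : 0 < K) (hnR : 0 < nR)
    (hθ : 0 < θ) :
    InjOn (fun ρ α => fderiv ℝ (freeEnergy m K nR θ pR ψR) ρ (Pi.single α 1))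
      {ρ : ι → ℝ | ∀ α, 0 < ρ α} := by
  refine convex_setOf_forall_pos.injOn_of_hasFDerivAt_of_dotProduct_pos
    (fun x hx => hasFDerivAt_pi.2 (hasFDerivAt_fderiv_freeEnergy_apply_single hm hnR hx))
    fun x hx d hd => ?_
  have hmulVec : (ContinuousLinearMap.pi fun β => ∑ γ, hessian m K nR θ x β γ •
      (ContinuousLinearMap.proj γ : (ι → ℝ) →L[ℝ] ℝ)) d = hessian m K nR θ x *ᵥ d := by
    ext β
    simp [mulVec, dotProduct, mul_comm]
  simpa [hmulVec] using (hessian_posDef hm hx hK hnR hθ).dotProduct_mulVec_pos hd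

end MixtureFreeEnergy

open MixtureFreeEnergy

/-- For the pure-phase free energy `F` of Statement 13, the chemical
potential map `μ_α(ρ) = ∂F/∂ρ_α(ρ)` is injective on the positive orthant, and at
every positive `ρ` the Hessian matrix `(∂μ_β/∂ρ_γ)(ρ)` is symmetric positive
definite, hence invertible. -/
theorem stmt_14 (N : ℕ) (hN : 2 ≤ N) (m : Fin N → ℝ) (hm : ∀ α : Fin N, 0 < m α)
    (K nR θ : ℝ) (hK : 0 < K) (hnR : 0 < nR) (hθ : 0 < θ)
    (pR : ℝ) (ψR : Fin N → ℝ) (F : (Fin N → ℝ) → ℝ)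
    (hF : ∀ ρ : Fin N → ℝ, F ρ =
      (∑ α, ρ α * ψR α)
      + (K - pR) * (1 - (∑ α, ρ α / m α) / nR)
      + K * ((∑ α, ρ α / m α) / nR) * Real.log ((∑ α, ρ α / m α) / nR)
      + θ * ∑ α, (ρ α / m α) * Real.log ((ρ α / m α) / (∑ β, ρ β / m β))) :
    Set.InjOn (fun ρ : Fin N → ℝ => fun α : Fin N => fderiv ℝ F ρ (Pi.single α 1))
      {ρ : Fin N → ℝ | ∀ α, 0 < ρ α} ∧
    (∀ ρ : Fin N → ℝ, ρ ∈ {ρ : Fin N → ℝ | ∀ α, 0 < ρ α} →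
      (Matrix.of fun β γ : Fin N =>
          fderiv ℝ (fun x : Fin N → ℝ => fderiv ℝ F x (Pi.single β 1)) ρ
            (Pi.single γ 1)).IsSymm ∧
      (Matrix.of fun β γ : Fin N =>
          fderiv ℝ (fun x : Fin N → ℝ => fderiv ℝ F x (Pi.single β 1)) ρ
            (Pi.single γ 1)).PosDef ∧
      IsUnit (Matrix.of fun β γ : Fin N =>
          fderiv ℝ (fun x : Fin N → ℝ => fderiv ℝ F x (Pi.single β 1)) ρ
            (Pi.single γ 1))) := by
  have : Nonempty (Fin N) := ⟨⟨0, by omega⟩⟩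
  obtain rfl : F = freeEnergy m K nR θ pR ψR := funext hF
  refine ⟨injOn_fderiv_freeEnergy hm hK hnR hθ, fun ρ hρ => ?_⟩
  rw [of_fderiv_fderiv_freeEnergy_eq_hessian hm hnR hρ]
  have hH := hessian_posDef hm hρ hK hnR hθ
  exact ⟨hessian_isSymm, hH, hH.isUnit⟩
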